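/- arXiv:1908.11556 — 2 statements merged into one kernel-verified Lean document; each statement's English description precedes it below -/
import Mathlib

section
/- Let U be a two-dimensional update family with stable set S(U) = S¹, and let β = β(U) ≥ 1 be its dilation radius. If 0 < ε < e^{−150β²} and C = C(ε) = −(1/(60β²))·log ε, then for every n ∈ ℕ, ℙ_ε(|K| ≥ n) ≤ ε^{n/(60β²)} = e^{−Cn}. -/
open scoped Classical

/-- Vertices of the two-dimensional lattice. -/
abbrev V2 : Type := ℤ × ℤ

/-- One step of `U`-bootstrap percolation on `ℤ²`:
`x` gets infected if `x + X ⊆ S` for some update rule `X ∈ U`. -/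
def ustep (U : Finset (Finset V2)) (S : Set V2) : Set V2 :=
  S ∪ {x | ∃ X ∈ U, ∀ y ∈ X, x + y ∈ S}

/-- The closure `⟨A⟩_U` under `U`-bootstrap percolation on `ℤ²`. -/
def uclosure (U : Finset (Finset V2)) (A : Set V2) : Set V2 :=
  ⋃ n, (ustep U)^[n] A

/-- The stable set of `U` is all of `S¹`: for every unit vector `u`, no update rule is
contained in the open half-plane `{x : ⟨x,u⟩ < 0}`. -/
def StableAll (U : Finset (Finset V2)) : Prop :=
  ∀ u : ℝ × ℝ, u.1 ^ 2 + u.2 ^ 2 = 1 →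
    ∀ X ∈ U, ∃ x ∈ X, 0 ≤ (x.1 : ℝ) * u.1 + (x.2 : ℝ) * u.2

/-- Euclidean distance between two points of `ℤ²`. -/
noncomputable def edist2 (x y : V2) : ℝ :=
  Real.sqrt (((x.1 - y.1 : ℤ) : ℝ) ^ 2 + ((x.2 - y.2 : ℤ) : ℝ) ^ 2)

/-- `ρ` is a dilation radius for `U`: every eventually infected site is within
Euclidean distance `ρ` of an initially infected site. -/
def DilationProp (U : Finset (Finset V2)) (ρ : ℝ) : Prop :=
  ∀ A : Set V2, ∀ x ∈ uclosure U A, ∃ y ∈ A, edist2 x y ≤ ρ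

/-- Nearest-neighbour adjacency on `ℤ²`. -/
def latAdj (u v : V2) : Prop := (u.1 - v.1).natAbs + (u.2 - v.2).natAbs = 1

/-- `S` is connected in the nearest-neighbour lattice graph on `ℤ²`:
any two of its points are joined by a lattice path staying in `S`. -/
def ConnIn (S : Set V2) : Prop :=
  ∀ x ∈ S, ∀ y ∈ S, Relation.ReflTransGen (fun u v => u ∈ S ∧ v ∈ S ∧ latAdj u v) x y

/-- The cluster `K = K(U,A)`: the connected component of the origin in the subgraph of the
nearest-neighbour lattice induced by `⟨A⟩_U` (empty if the origin is not infected). -/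
def cluster (U : Finset (Finset V2)) (A : Set V2) : Set V2 :=
  {x | ((0, 0) : V2) ∈ uclosure U A ∧ x ∈ uclosure U A ∧
    Relation.ReflTransGen
      (fun u v => u ∈ uclosure U A ∧ v ∈ uclosure U A ∧ latAdj u v) ((0, 0) : V2) x}

namespace BP

/-- ℓ¹ size of a lattice vector. -/
def dd (v : V2) : ℕ := v.1.natAbs + v.2.natAbs

/-- ℓ¹ distance on the lattice. -/
def d1 (u v : V2) : ℕ := dd (u - v)

lemma d1_comm (u v : V2) : d1 u v = d1 v u := by
  simp only [d1, dd, Prod.fst_sub, Prod.snd_sub]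
  omega

lemma d1_triangle (u v w : V2) : d1 u w ≤ d1 u v + d1 v w := by
  simp only [d1, dd, Prod.fst_sub, Prod.snd_sub]
  omega

noncomputable def fc (v : V2) : ℂ := ⟨(v.1 : ℝ), (v.2 : ℝ)⟩

lemma edist2_eq_dist (x y : V2) : edist2 x y = dist (fc x) (fc y) := by
  rw [Complex.dist_eq, Complex.norm_def, Complex.normSq_apply]
  unfold edist2 fc
  simp only [Complex.sub_re, Complex.sub_im]
  push_cast
  ring_nf

lemma edist2_comm (x y : V2) : edist2 x y = edist2 y x := by
  rw [edist2_eq_dist, edist2_eq_dist, dist_comm]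

lemma edist2_self (x : V2) : edist2 x x = 0 := by
  rw [edist2_eq_dist, dist_self]

lemma edist2_triangle (x y z : V2) : edist2 x z ≤ edist2 x y + edist2 y z := by
  rw [edist2_eq_dist, edist2_eq_dist, edist2_eq_dist]
  exact dist_triangle _ _ _

lemma abs_fst_le_edist2 (x y : V2) : |((x.1 - y.1 : ℤ) : ℝ)| ≤ edist2 x y := by
  rw [edist2_eq_dist, Complex.dist_eq]
  have h := Complex.abs_re_le_norm (fc x - fc y)
  simpa [fc, Complex.sub_re] using h

lemma abs_snd_le_edist2 (x y : V2) : |((x.2 - y.2 : ℤ) : ℝ)| ≤ edist2 x y := by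
  rw [edist2_eq_dist, Complex.dist_eq]
  have h := Complex.abs_im_le_norm (fc x - fc y)
  simpa [fc, Complex.sub_im] using h

lemma natAbs_fst_le_floor {x y : V2} {r : ℝ} (h : edist2 x y ≤ r) :
    (x.1 - y.1).natAbs ≤ ⌊r⌋₊ := by
  apply Nat.le_floor
  calc ((x.1 - y.1).natAbs : ℝ) = |((x.1 - y.1 : ℤ) : ℝ)| := by
        rw [Nat.cast_natAbs, Int.cast_abs]
      _ ≤ edist2 x y := abs_fst_le_edist2 x y
      _ ≤ r := h

lemma natAbs_snd_le_floor {x y : V2} {r : ℝ} (h : edist2 x y ≤ r) :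
    (x.2 - y.2).natAbs ≤ ⌊r⌋₊ := by
  apply Nat.le_floor
  calc ((x.2 - y.2).natAbs : ℝ) = |((x.2 - y.2 : ℤ) : ℝ)| := by
        rw [Nat.cast_natAbs, Int.cast_abs]
      _ ≤ edist2 x y := abs_snd_le_edist2 x y
      _ ≤ r := h

lemma d1_le_of_edist2 {x y : V2} {r : ℝ} (h : edist2 x y ≤ r) :
    d1 x y ≤ 2 * ⌊r⌋₊ := by
  have h1 := natAbs_fst_le_floor h
  have h2 := natAbs_snd_le_floor h
  simp only [d1, dd, Prod.fst_sub, Prod.snd_sub]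
  omega

lemma d1_eq_one_of_latAdj {u v : V2} (h : latAdj u v) : d1 u v = 1 := h

end BP
namespace BP

/-- The lattice box of ℓ∞ radius `r`. -/
noncomputable def box (r : ℕ) : Finset V2 := Finset.Icc (-(r:ℤ)) r ×ˢ Finset.Icc (-(r:ℤ)) r

lemma card_box (r : ℕ) : (box r).card = (2*r+1)^2 := by
  simp only [box, Finset.card_product, Int.card_Icc]
  have : ((r:ℤ) + 1 - (-(r:ℤ))).toNat = 2*r+1 := by omega
  rw [this]; ring

lemma mem_box_of_dd_le {v : V2} {r : ℕ} (h : dd v ≤ r) : v ∈ box r := by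
  simp only [box, Finset.mem_product, Finset.mem_Icc]
  simp only [dd] at h
  omega

/-- Exact identity for the weighted sum `F(D) = ∑_{k≤D} (2k+1)² 4^{D-k}`. -/
lemma F_identity (D : ℕ) :
    27 * (∑ k ∈ Finset.range (D+1), (2*k+1)^2 * 4^(D-k)) + 36*D^2 + 132*D + 137
      = 164 * 4^D := by
  induction D with
  | zero => simp
  | succ D ih =>
    have hstep : (∑ k ∈ Finset.range (D+2), (2*k+1)^2 * 4^(D+1-k))
        = 4 * (∑ k ∈ Finset.range (D+1), (2*k+1)^2 * 4^(D-k)) + (2*(D+1)+1)^2 := by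
      rw [Finset.sum_range_succ, Finset.mul_sum]
      congr 1
      · apply Finset.sum_congr rfl
        intro k hk
        have hk' : k ≤ D := by simpa [Nat.lt_succ_iff] using hk
        have : D + 1 - k = (D - k) + 1 := by omega
        rw [this, pow_succ]
        ring
      · simp
    rw [hstep]
    zify at ih ⊢
    linear_combination (4:ℤ) * ih

lemma F_le (D : ℕ) :
    (∑ k ∈ Finset.range (D+1), (2*k+1)^2 * 4^(D-k)) ≤ 7 * 4^D := by
  have h := F_identity D
  omega

/-- The finset of step sequences with total ℓ¹ length at most `D`. -/
noncomputable def T (D : ℕ) (m : ℕ) : Finset (Fin m → V2) :=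
  (Fintype.piFinset (fun _ => box D)).filter (fun s => (∑ i, dd (s i)) ≤ D)

lemma card_T : ∀ (m D : ℕ), (T D m).card ≤ 7^m * 4^D := by
  intro m
  induction m with
  | zero =>
    intro D
    have h1 : (T D 0).card ≤ (Fintype.piFinset (fun _ : Fin 0 => box D)).card :=
      Finset.card_filter_le _ _
    have h2 : (Fintype.piFinset (fun _ : Fin 0 => box D)).card = 1 := by
      simp [Fintype.card_piFinset]
    have h3 : 0 < 7^0 * 4^D := by positivity
    omega
  | succ m ih =>
    intro D
    -- inject into a biUnion
    set B : Finset V2 := (box D).filter (fun z => dd z ≤ D) with hB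
    set P : Finset (V2 × (Fin m → V2)) :=
      B.biUnion (fun z => {z} ×ˢ T (D - dd z) m) with hP
    have hinj : (T D (m+1)).card ≤ P.card := by
      apply Finset.card_le_card_of_injOn (fun s => (s 0, Fin.tail s))
      · intro s hs
        simp only [Finset.mem_coe, T, Finset.mem_filter, Fintype.mem_piFinset] at hs
        obtain ⟨hmem, hsum⟩ := hs
        have hs0 : dd (s 0) ≤ D := by
          refine le_trans ?_ hsum
          exact Finset.single_le_sum (f := fun i => dd (s i)) (fun i _ => Nat.zero_le _)
            (Finset.mem_univ 0)
        have hsplit : dd (s 0) + (∑ i, dd (Fin.tail s i)) = ∑ i, dd (s i) := by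
          rw [Fin.sum_univ_succ]; rfl
        have htsum : (∑ i, dd (Fin.tail s i)) ≤ D - dd (s 0) := by omega
        simp only [Finset.mem_coe, hP, Finset.mem_biUnion]
        refine ⟨s 0, ?_, ?_⟩
        · simp only [hB, Finset.mem_filter]
          exact ⟨hmem 0, hs0⟩
        · refine Finset.mem_product.mpr ⟨Finset.mem_singleton_self _, ?_⟩
          simp only [T, Finset.mem_filter, Fintype.mem_piFinset]
          refine ⟨fun i => ?_, htsum⟩
          apply mem_box_of_dd_le
          refine le_trans ?_ htsum
          exact Finset.single_le_sum (f := fun i => dd (Fin.tail s i))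
            (fun i _ => Nat.zero_le _) (Finset.mem_univ i)
      · intro s hs s' hs' h
        simp only [Prod.mk.injEq] at h
        have := Fin.cons_self_tail s
        rw [← Fin.cons_self_tail s, ← Fin.cons_self_tail s', h.1, h.2]
    have hcardP : P.card ≤ ∑ z ∈ B, (T (D - dd z) m).card := by
      refine (Finset.card_biUnion_le).trans ?_
      apply Finset.sum_le_sum
      intro z _
      simp [Finset.card_product]
    have hsum1 : (∑ z ∈ B, (T (D - dd z) m).card) ≤ ∑ z ∈ B, 7^m * 4^(D - dd z) :=
      Finset.sum_le_sum (fun z _ => ih _)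
    have hsum2 : (∑ z ∈ B, 7^m * 4^(D - dd z)) = 7^m * ∑ z ∈ B, 4^(D - dd z) := by
      rw [Finset.mul_sum]
    have hfiber : (∑ z ∈ B, 4^(D - dd z)) ≤ 7 * 4^D := by
      have hmaps : ∀ z ∈ B, dd z ∈ Finset.range (D+1) := by
        intro z hz
        simp only [hB, Finset.mem_filter] at hz
        simp [Nat.lt_succ_iff, hz.2]
      rw [← Finset.sum_fiberwise_of_maps_to hmaps (fun z => 4^(D - dd z))]
      calc (∑ k ∈ Finset.range (D+1), ∑ z ∈ B.filter (fun z => dd z = k), 4^(D - dd z))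
          = ∑ k ∈ Finset.range (D+1), (B.filter (fun z => dd z = k)).card * 4^(D-k) := by
            apply Finset.sum_congr rfl
            intro k _
            rw [Finset.sum_congr rfl (g := fun _ => 4^(D-k))
              (fun z hz => by simp only [Finset.mem_filter] at hz; rw [hz.2]),
              Finset.sum_const, smul_eq_mul]
        _ ≤ ∑ k ∈ Finset.range (D+1), (2*k+1)^2 * 4^(D-k) := by
            apply Finset.sum_le_sum
            intro k _
            apply Nat.mul_le_mul_right
            calc (B.filter (fun z => dd z = k)).card ≤ (box k).card := by
                  apply Finset.card_le_card
                  intro z hz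
                  simp only [Finset.mem_filter] at hz
                  exact mem_box_of_dd_le (le_of_eq hz.2)
              _ = (2*k+1)^2 := card_box k
        _ ≤ 7 * 4^D := F_le D
    calc (T D (m+1)).card ≤ P.card := hinj
      _ ≤ 7^m * ∑ z ∈ B, 4^(D - dd z) := by omega
      _ ≤ 7^m * (7 * 4^D) := Nat.mul_le_mul_left _ hfiber
      _ = 7^(m+1) * 4^D := by ring

end BP
namespace BP

/-- Total ℓ¹ length of a lattice path. -/
def pathSum : List V2 → ℕ
  | a :: b :: t => d1 a b + pathSum (b :: t)
  | _ => 0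

lemma pathSum_cons_le (x : V2) (L : List V2) : pathSum L ≤ pathSum (x :: L) := by
  cases L with
  | nil => simp [pathSum]
  | cons b t => simp [pathSum]

lemma pathSum_cons_sublist {L' L : List V2} (h : List.Sublist L' L) (x : V2) :
    pathSum (x :: L') ≤ pathSum (x :: L) := by
  induction h generalizing x with
  | slnil => exact le_refl _
  | cons a h ih =>
    rename_i l₁ l₂
    cases l₁ with
    | nil => simp [pathSum]
    | cons b t =>
      calc pathSum (x :: b :: t) = d1 x b + pathSum (b :: t) := rfl
        _ ≤ (d1 x a + d1 a b) + pathSum (b :: t) := by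
            have := d1_triangle x a b; omega
        _ = d1 x a + pathSum (a :: b :: t) := by simp [pathSum]; omega
        _ ≤ d1 x a + pathSum (a :: l₂) := by have := ih a; omega
        _ = pathSum (x :: a :: l₂) := rfl
  | cons_cons a h ih =>
    rename_i l₁ l₂
    calc pathSum (x :: a :: l₁) = d1 x a + pathSum (a :: l₁) := rfl
      _ ≤ d1 x a + pathSum (a :: l₂) := by have := ih a; omega
      _ = pathSum (x :: a :: l₂) := rfl

lemma pathSum_sublist {L' L : List V2} (h : List.Sublist L' L) : pathSum L' ≤ pathSum L := by
  induction h with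
  | slnil => exact le_refl _
  | cons a h ih => exact ih.trans (pathSum_cons_le a _)
  | cons_cons a h ih => exact pathSum_cons_sublist (by assumption) a

lemma pathSum_chain' : ∀ {L : List V2}, L.Chain' latAdj → pathSum L ≤ L.length - 1 := by
  intro L
  induction L with
  | nil => simp [pathSum]
  | cons a t ih =>
    intro h
    cases t with
    | nil => simp [pathSum]
    | cons b t' =>
      simp only [List.Chain', List.isChain_cons_cons] at h
      have h1 : d1 a b = 1 := d1_eq_one_of_latAdj h.1
      have h2 := ih h.2
      simp only [pathSum, List.length_cons] at *
      omega

lemma pathSum_eq_sum (L : List V2) :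
    pathSum L = ∑ i ∈ Finset.range (L.length - 1),
      d1 (L.getD i (0,0)) (L.getD (i+1) (0,0)) := by
  induction L with
  | nil => simp [pathSum]
  | cons a t ih =>
    cases t with
    | nil => simp [pathSum]
    | cons b t' =>
      have hlen : (a :: b :: t').length - 1 = ((b :: t').length - 1) + 1 := by
        simp
      rw [hlen, Finset.sum_range_succ']
      simp only [pathSum]
      rw [ih]
      have : ∀ i, ((a :: b :: t').getD (i+1) (0,0)) = ((b :: t').getD i (0,0)) := by
        intro i; rfl
      simp only [this]
      have h0 : ((a :: b :: t').getD 0 (0,0)) = a := rfl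
      have h1 : ((b :: t').getD 0 (0,0)) = b := rfl
      rw [h0, h1]
      omega

end BP
namespace BP

variable (β : ℝ)

/-- Fuelled greedy selection of a `2β`-separated subsequence. -/
noncomputable def selF : ℕ → List V2 → List V2
  | 0, _ => []
  | _+1, [] => []
  | f+1, x :: t => x :: selF f (t.filter (fun z => 2*β < edist2 x z))

lemma selF_sublist : ∀ (f : ℕ) (l : List V2), List.Sublist (selF β f l) l := by
  intro f
  induction f with
  | zero => intro l; simp [selF]
  | succ f ih =>
    intro l
    cases l with
    | nil => simp [selF]
    | cons x t =>
      simp only [selF]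
      exact List.Sublist.cons₂ x (((ih _)).trans List.filter_sublist)

lemma selF_pairwise : ∀ (f : ℕ) (l : List V2),
    (selF β f l).Pairwise (fun a b => 2*β < edist2 a b) := by
  intro f
  induction f with
  | zero => intro l; simp [selF]
  | succ f ih =>
    intro l
    cases l with
    | nil => simp [selF]
    | cons x t =>
      simp only [selF]
      refine List.Pairwise.cons ?_ (ih _)
      intro b hb
      have hb' : b ∈ t.filter (fun z => decide (2*β < edist2 x z)) :=
        (selF_sublist β f _).subset hb
      simpa using (List.mem_filter.mp hb').2

lemma selF_cover : ∀ (f : ℕ) (l : List V2), l.length ≤ f → (0:ℝ) ≤ β →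
    ∀ z ∈ l, ∃ c ∈ selF β f l, edist2 c z ≤ 2*β := by
  intro f
  induction f with
  | zero =>
    intro l hl _ z hz
    interval_cases h : l.length
    · simp [List.length_eq_zero_iff] at h
      subst h; simp at hz
  | succ f ih =>
    intro l hl hβ0 z hz
    cases l with
    | nil => simp at hz
    | cons x t =>
      rcases List.mem_cons.mp hz with rfl | hzt
      · exact ⟨z, by simp [selF], by rw [edist2_self]; positivity⟩
      · by_cases hfar : 2*β < edist2 x z
        · have hzf : z ∈ t.filter (fun z => decide (2*β < edist2 x z)) := by
            simp [List.mem_filter, hzt, hfar]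
          have hlen : (t.filter (fun z => decide (2*β < edist2 x z))).length ≤ f := by
            have := List.length_filter_le (fun z => decide (2*β < edist2 x z)) t
            simp only [List.length_cons] at hl
            omega
          obtain ⟨c, hc, hcd⟩ := ih _ hlen hβ0 z hzf
          exact ⟨c, by simp [selF, List.mem_cons]; right; exact hc, hcd⟩
        · exact ⟨x, by simp [selF], le_of_not_gt hfar⟩

lemma selF_cons_head (f : ℕ) (x : V2) (t : List V2) :
    selF β (f+1) (x :: t) = x :: selF β f (t.filter (fun z => 2*β < edist2 x z)) := rfl

end BP
namespace BP

lemma latAdj_symm {u v : V2} (h : latAdj u v) : latAdj v u := by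
  simp only [latAdj] at *
  omega

/-- First-exit lemma: a relational path starting inside a set and ending outside it
crosses the boundary. -/
lemma exit_lemma {r : V2 → V2 → Prop} {T : Finset V2} {a z : V2}
    (hpath : Relation.ReflTransGen r a z) (ha : a ∈ T) (hz : z ∉ T) :
    ∃ u ∈ T, ∃ w, w ∉ T ∧ r u w := by
  induction hpath with
  | refl => exact absurd ha hz
  | tail hab hbc ih =>
    rename_i b c
    by_cases hb : b ∈ T
    · exact ⟨b, hb, c, hz, hbc⟩
    · exact ih hb

lemma head?_append_cons (L₁ L₂ L₃ : List V2) (u : V2) :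
    (L₁ ++ u :: L₂).head? = (L₁ ++ u :: L₃).head? := by
  cases L₁ <;> simp

/-- Existence of a short walk through many vertices of the cluster. -/
lemma walk_exists (U : Finset (Finset V2)) (A : Set V2) :
    ∀ n : ℕ, 1 ≤ n → (n : ℕ∞) ≤ (cluster U A).encard →
    ∃ L : List V2, L.Chain' latAdj ∧ (∀ v ∈ L, v ∈ uclosure U A) ∧
      L.head? = some ((0,0) : V2) ∧ L.length ≤ 2*n - 1 ∧ n ≤ L.toFinset.card := by
  intro n
  induction n with
  | zero => omega
  | succ n ih =>
    intro _ hcard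
    by_cases hn : 1 ≤ n
    · obtain ⟨L, hchain, hmem, hhead, hlen, hc⟩ :=
        ih hn (le_trans (by exact_mod_cast Nat.cast_le.mpr (Nat.le_succ n)) hcard)
      by_cases hbig : n + 1 ≤ L.toFinset.card
      · exact ⟨L, hchain, hmem, hhead, by omega, hbig⟩
      · -- L.toFinset.card = n; find a new vertex to insert
        have hcardL : L.toFinset.card = n := by omega
        have hnotsub : ¬ (cluster U A ⊆ ↑L.toFinset) := by
          intro hsub
          have h1 : (cluster U A).encard ≤ (↑L.toFinset : Set V2).encard :=
            Set.encard_mono hsub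
          rw [Set.encard_coe_eq_coe_finsetCard, hcardL] at h1
          have h2 : ((n+1 : ℕ) : ℕ∞) ≤ (n : ℕ∞) := le_trans hcard h1
          exact absurd (by exact_mod_cast h2) (by omega)
        obtain ⟨z, hzc, hznot⟩ := Set.not_subset.mp hnotsub
        -- path from the origin to z
        obtain ⟨h0, hzu, hpath⟩ := hzc
        have h0mem : ((0,0) : V2) ∈ L.toFinset := by
          rw [List.mem_toFinset]
          have : L = (0,0) :: L.tail := by
            cases L with
            | nil => simp at hhead
            | cons a t => simp at hhead; simp [hhead]
          rw [this]; exact List.mem_cons_self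
        have hznotf : z ∉ L.toFinset := by simpa using hznot
        obtain ⟨u, huT, w, hwT, hr⟩ := exit_lemma hpath h0mem hznotf
        obtain ⟨huU, hwU, hadj⟩ := hr
        -- insert w next to u in L
        have huL : u ∈ L := List.mem_toFinset.mp huT
        obtain ⟨L₁, L₂, rfl⟩ := List.append_of_mem huL
        refine ⟨L₁ ++ u :: w :: u :: L₂, ?_, ?_, ?_, ?_, ?_⟩
        · simp only [List.Chain'] at hchain ⊢
          rw [List.isChain_split] at hchain ⊢
          refine ⟨hchain.1, ?_⟩
          rw [List.isChain_cons_cons]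
          exact ⟨hadj, by rw [List.isChain_cons_cons]; exact ⟨latAdj_symm hadj, hchain.2⟩⟩
        · intro v hv
          simp only [List.mem_append, List.mem_cons] at hv
          rcases hv with h | h | h | h | h
          · exact hmem v (by simp [h])
          · exact hmem v (by simp [h])
          · subst h; exact hwU
          · exact hmem v (by simp [h])
          · exact hmem v (by simp [h])
        · rw [← hhead]; exact head?_append_cons L₁ _ _ u
        · simp only [List.length_append, List.length_cons] at hlen ⊢
          omega
        · have hins : (L₁ ++ u :: w :: u :: L₂).toFinset
              = insert w (L₁ ++ u :: L₂).toFinset := by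
            ext a
            simp only [List.mem_toFinset, Finset.mem_insert, List.mem_append,
              List.mem_cons]
            tauto
          rw [hins, Finset.card_insert_of_notMem hwT, hcardL]
    · -- n = 0, so n+1 = 1
      have hn0 : n = 0 := by omega
      subst hn0
      have hne : (cluster U A).Nonempty := by
        rw [Set.nonempty_iff_ne_empty]
        intro hemp
        rw [hemp, Set.encard_empty] at hcard
        simp at hcard
      obtain ⟨z, h0, _, _⟩ := hne
      refine ⟨[(0,0)], by simp [List.Chain'], ?_, rfl, by simp, by simp⟩
      intro v hv
      simp only [List.mem_cons, List.not_mem_nil, or_false] at hv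
      subst hv; exact h0

end BP
namespace BP

/-- Box around a centre. -/
noncomputable def boxAt (c : V2) (r : ℕ) : Finset V2 :=
  Finset.Icc (c.1 - r) (c.1 + r) ×ˢ Finset.Icc (c.2 - r) (c.2 + r)

lemma card_boxAt (c : V2) (r : ℕ) : (boxAt c r).card = (2*r+1)^2 := by
  simp only [boxAt, Finset.card_product, Int.card_Icc]
  have : ((c.1 + r) + 1 - (c.1 - r)).toNat = 2*r+1 := by omega
  have h2 : ((c.2 + r) + 1 - (c.2 - r)).toNat = 2*r+1 := by omega
  rw [this, h2]; ring

lemma mem_boxAt {c z : V2} {r : ℕ} (h1 : (z.1 - c.1).natAbs ≤ r)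
    (h2 : (z.2 - c.2).natAbs ≤ r) : z ∈ boxAt c r := by
  simp only [boxAt, Finset.mem_product, Finset.mem_Icc]
  omega

/-- Main deterministic extraction: a large cluster yields an injective sequence of
initially-infected sites with small total step length. -/
lemma extract (U : Finset (Finset V2)) (A : Set V2) (β : ℝ) (hβ1 : 1 ≤ β)
    (hdil : DilationProp U β) (n b m D : ℕ) (hn : 1 ≤ n)
    (hb : ⌊β⌋₊ ≤ b) (hm1 : 1 ≤ m)
    (hm2 : ∀ k : ℕ, 1 ≤ k → (n:ℝ) ≤ 25*β^2*k → m ≤ k)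
    (hD : 2*n + 4*b*m ≤ D)
    (hcard : (n : ℕ∞) ≤ (cluster U A).encard) :
    ∃ y : ℕ → V2, (∀ i, i < m → y i ∈ A) ∧
      (∀ i, i < m → ∀ j, j < m → i ≠ j → y i ≠ y j) ∧
      (y 0 ∈ box (2*b)) ∧
      ((fun j : Fin (m-1) => y ((j:ℕ)+1) - y (j:ℕ)) ∈ T D (m-1)) := by
  have hβ0 : (0:ℝ) ≤ β := by linarith
  obtain ⟨L, hchain, hmem, hhead, hlen, hLc⟩ := walk_exists U A n hn hcard
  -- L starts at the origin
  have hLform : L = ((0,0) : V2) :: L.tail := by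
    cases L with
    | nil => simp at hhead
    | cons a t => simp at hhead; simp [hhead]
  set selL := selF β L.length L with hselL
  have hsub : List.Sublist selL L := selF_sublist β _ _
  have hpw : selL.Pairwise (fun a b => 2*β < edist2 a b) := selF_pairwise β _ _
  have hselform : selL = ((0,0) : V2) :: (selF β L.tail.length
      (L.tail.filter (fun z => 2*β < edist2 (0,0) z))) := by
    rw [hselL]
    conv_lhs => rw [hLform]
    simp only [List.length_cons]
    rfl
  have hsel1 : 1 ≤ selL.length := by rw [hselform]; simp
  -- coverage: every vertex of `L` is within `2β` of a selected vertex
  have hcover := selF_cover β L.length L (le_refl _) hβ0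
  -- counting: `n ≤ 25 β² · selL.length`
  set r := ⌊2*β⌋₊ with hr
  have hcount : L.toFinset.card ≤ selL.length * (2*r+1)^2 := by
    have hsubset : L.toFinset ⊆ selL.toFinset.biUnion (fun c => boxAt c r) := by
      intro z hz
      rw [List.mem_toFinset] at hz
      obtain ⟨c, hc, hcd⟩ := hcover z hz
      rw [Finset.mem_biUnion]
      refine ⟨c, List.mem_toFinset.mpr hc, ?_⟩
      rw [edist2_comm] at hcd
      exact mem_boxAt (natAbs_fst_le_floor hcd) (natAbs_snd_le_floor hcd)
    calc L.toFinset.card ≤ (selL.toFinset.biUnion (fun c => boxAt c r)).card :=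
          Finset.card_le_card hsubset
      _ ≤ ∑ c ∈ selL.toFinset, (boxAt c r).card := Finset.card_biUnion_le
      _ = selL.toFinset.card * (2*r+1)^2 := by
          rw [Finset.sum_congr rfl (fun c _ => card_boxAt c r), Finset.sum_const,
            smul_eq_mul]
      _ ≤ selL.length * (2*r+1)^2 :=
          Nat.mul_le_mul_right _ selL.toFinset_card_le
  have hreal : (n:ℝ) ≤ 25*β^2*selL.length := by
    have h1 : (n:ℝ) ≤ (selL.length : ℝ) * ((2*r+1:ℕ):ℝ)^2 := by
      have : (n:ℝ) ≤ ((selL.length * (2*r+1)^2 : ℕ) : ℝ) := by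
        exact_mod_cast le_trans hLc hcount
      push_cast at this ⊢
      linarith
    have hrle : (r:ℝ) ≤ 2*β := by rw [hr]; exact Nat.floor_le (by linarith)
    have h2 : ((2*r+1:ℕ):ℝ) ≤ 5*β := by push_cast; linarith
    have h3 : ((2*r+1:ℕ):ℝ)^2 ≤ (5*β)^2 :=
      pow_le_pow_left₀ (by positivity) h2 2
    nlinarith [Nat.cast_nonneg (α := ℝ) selL.length]
  have hmsel : m ≤ selL.length := hm2 _ hsel1 hreal
  -- the truncated selected list
  set xl := selL.take m with hxl
  have hxlen : xl.length = m := by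
    rw [hxl, List.length_take]
    omega
  have hxl_sub : List.Sublist xl L := (List.take_sublist _ _).trans hsub
  have hxl_pw : xl.Pairwise (fun a b => 2*β < edist2 a b) :=
    hpw.sublist (List.take_sublist _ _)
  have hxl0 : xl.getD 0 (0,0) = ((0,0) : V2) := by
    rw [hxl, hselform]
    cases m with
    | zero => omega
    | succ k => rfl
  have hxmem : ∀ i, i < m → xl.getD i (0,0) ∈ uclosure U A := by
    intro i hi
    have hilen : i < xl.length := by omega
    rw [List.getD_eq_getElem _ _ hilen]
    exact hmem _ (hxl_sub.subset (List.getElem_mem _))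
  -- choose nearby initially infected sites
  have hch : ∀ x, x ∈ uclosure U A → ∃ yy, yy ∈ A ∧ edist2 x yy ≤ β := by
    intro x hx
    obtain ⟨yy, h1, h2⟩ := hdil A x hx
    exact ⟨yy, h1, h2⟩
  choose! Y hYA hYd using hch
  refine ⟨fun i => Y (xl.getD i (0,0)), ?_, ?_, ?_, ?_⟩
  · intro i hi
    exact hYA _ (hxmem i hi)
  · -- injectivity via separation
    intro i hi j hj hij heq
    -- wlog i < j
    have key : ∀ i j, i < xl.length → j < xl.length → i < j →
        Y (xl.getD i (0,0)) ≠ Y (xl.getD j (0,0)) := by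
      intro i j hi hj hlt heq
      have hpair := (List.pairwise_iff_getElem.mp hxl_pw) i j hi hj hlt
      rw [List.getD_eq_getElem _ _ hi, List.getD_eq_getElem _ _ hj] at heq
      set xi := xl[i] with hxi
      set xj := xl[j] with hxj
      have hxiU : xi ∈ uclosure U A := by
        rw [hxi]; exact hmem _ (hxl_sub.subset (List.getElem_mem _))
      have hxjU : xj ∈ uclosure U A := by
        rw [hxj]; exact hmem _ (hxl_sub.subset (List.getElem_mem _))
      have h1 : edist2 xi (Y xi) ≤ β := hYd _ hxiU
      have h2 : edist2 xj (Y xj) ≤ β := hYd _ hxjU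
      have h4 : edist2 (Y xi) xj ≤ β := by
        rw [heq, edist2_comm]; exact h2
      linarith [edist2_triangle xi (Y xi) xj]
    have hi' : i < xl.length := by omega
    have hj' : j < xl.length := by omega
    rcases lt_or_gt_of_ne hij with h | h
    · exact key i j hi' hj' h heq
    · exact key j i hj' hi' h heq.symm
  · -- starting point in the box
    have h0 : edist2 (xl.getD 0 (0,0)) (Y (xl.getD 0 (0,0))) ≤ β :=
      hYd _ (hxmem 0 (by omega))
    show Y (xl.getD 0 (0,0)) ∈ box (2*b)
    rw [hxl0] at h0 ⊢
    have hb1 := natAbs_fst_le_floor h0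
    have hb2 := natAbs_snd_le_floor h0
    have e1 : (((0,0) : V2)).1 = 0 := rfl
    have e2 : (((0,0) : V2)).2 = 0 := rfl
    rw [e1] at hb1
    rw [e2] at hb2
    apply mem_box_of_dd_le
    simp only [dd]
    omega
  · -- steps lie in `T D (m-1)`
    have hd1Y : ∀ i, i < m → d1 (Y (xl.getD i (0,0))) (xl.getD i (0,0)) ≤ 2*b := by
      intro i hi
      have h := hYd _ (hxmem i hi)
      rw [edist2_comm] at h
      exact le_trans (d1_le_of_edist2 h) (by omega)
    have hstepsum : (∑ i ∈ Finset.range (m-1),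
        d1 (Y (xl.getD (i+1) (0,0))) (Y (xl.getD i (0,0)))) ≤ D := by
      have hterm : ∀ i ∈ Finset.range (m-1),
          d1 (Y (xl.getD (i+1) (0,0))) (Y (xl.getD i (0,0)))
            ≤ 4*b + d1 (xl.getD i (0,0)) (xl.getD (i+1) (0,0)) := by
        intro i hi
        rw [Finset.mem_range] at hi
        have h1 := hd1Y (i+1) (by omega)
        have h2 := hd1Y i (by omega)
        have t1 := d1_triangle (Y (xl.getD (i+1) (0,0))) (xl.getD (i+1) (0,0))
          (Y (xl.getD i (0,0)))
        have t2 := d1_triangle (xl.getD (i+1) (0,0)) (xl.getD i (0,0))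
          (Y (xl.getD i (0,0)))
        have hc1 : d1 (xl.getD i (0,0)) (Y (xl.getD i (0,0)))
            = d1 (Y (xl.getD i (0,0))) (xl.getD i (0,0)) := d1_comm _ _
        have hc2 : d1 (xl.getD (i+1) (0,0)) (xl.getD i (0,0))
            = d1 (xl.getD i (0,0)) (xl.getD (i+1) (0,0)) := d1_comm _ _
        have hc3 : d1 (xl.getD i (0,0)) (Y (xl.getD i (0,0)))
            ≤ 2*b := by rw [hc1]; exact h2
        omega
      have hpath : (∑ i ∈ Finset.range (m-1),
          d1 (xl.getD i (0,0)) (xl.getD (i+1) (0,0))) ≤ 2*n - 2 := by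
        have he : (∑ i ∈ Finset.range (m-1),
            d1 (xl.getD i (0,0)) (xl.getD (i+1) (0,0))) = pathSum xl := by
          rw [pathSum_eq_sum, hxlen]
        rw [he]
        have hp1 : pathSum xl ≤ pathSum L := pathSum_sublist hxl_sub
        have hp2 : pathSum L ≤ L.length - 1 := pathSum_chain' hchain
        omega
      calc (∑ i ∈ Finset.range (m-1),
          d1 (Y (xl.getD (i+1) (0,0))) (Y (xl.getD i (0,0))))
          ≤ ∑ i ∈ Finset.range (m-1),
            (4*b + d1 (xl.getD i (0,0)) (xl.getD (i+1) (0,0))) :=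
            Finset.sum_le_sum hterm
        _ = (m-1)*(4*b) + ∑ i ∈ Finset.range (m-1),
            d1 (xl.getD i (0,0)) (xl.getD (i+1) (0,0)) := by
            rw [Finset.sum_add_distrib, Finset.sum_const, Finset.card_range,
              smul_eq_mul]
        _ ≤ D := by
            have h5 : (m-1)*(4*b) ≤ 4*b*m := by
              calc (m-1)*(4*b) ≤ m*(4*b) := Nat.mul_le_mul_right _ (Nat.sub_le m 1)
                _ = 4*b*m := by ring
            omega
    simp only [T, Finset.mem_filter, Fintype.mem_piFinset]
    have hsum_eq : (∑ j : Fin (m-1), dd ((fun j : Fin (m-1) =>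
        Y (xl.getD ((j:ℕ)+1) (0,0)) - Y (xl.getD (j:ℕ) (0,0))) j))
        = ∑ i ∈ Finset.range (m-1),
          d1 (Y (xl.getD (i+1) (0,0))) (Y (xl.getD i (0,0))) := by
      rw [Fin.sum_univ_eq_sum_range (fun i =>
        dd (Y (xl.getD (i+1) (0,0)) - Y (xl.getD i (0,0))))]
      rfl
    constructor
    · intro j
      apply mem_box_of_dd_le
      have hle : dd (Y (xl.getD ((j:ℕ)+1) (0,0)) - Y (xl.getD (j:ℕ) (0,0)))
          ≤ ∑ i ∈ Finset.range (m-1),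
            d1 (Y (xl.getD (i+1) (0,0))) (Y (xl.getD i (0,0))) := by
        have hjm : (j:ℕ) ∈ Finset.range (m-1) := by
          rw [Finset.mem_range]; exact j.2
        exact Finset.single_le_sum (f := fun i =>
          d1 (Y (xl.getD (i+1) (0,0))) (Y (xl.getD i (0,0))))
          (fun i _ => Nat.zero_le _) hjm
      exact le_trans hle hstepsum
    · rw [hsum_eq]; exact hstepsum

end BP
namespace BP

/-- Decode a code (starting point, steps) into a tuple of sites. -/
def dec (m : ℕ) (c : V2 × (Fin (m-1) → V2)) : Fin m → V2 :=
  fun i => c.1 + ∑ j ∈ Finset.univ.filter (fun j : Fin (m-1) => (j:ℕ) < (i:ℕ)), c.2 j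

lemma dec_eq (m : ℕ) (y : ℕ → V2) (i : Fin m) :
    dec m (y 0, fun j : Fin (m-1) => y ((j:ℕ)+1) - y (j:ℕ)) i = y (i:ℕ) := by
  suffices h : ∀ k, k < m → (∑ j ∈ Finset.univ.filter (fun j : Fin (m-1) => (j:ℕ) < k),
      (y ((j:ℕ)+1) - y (j:ℕ))) = y k - y 0 by
    have h2 := h (i:ℕ) i.2
    unfold dec
    simp only
    rw [h2]
    abel
  intro k
  induction k with
  | zero =>
    intro _
    have : Finset.univ.filter (fun j : Fin (m-1) => (j:ℕ) < 0) = ∅ := by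
      apply Finset.filter_false_of_mem
      intro j _
      omega
    rw [this, Finset.sum_empty, sub_self]
  | succ k ih =>
    intro hk
    have hkm : k < m - 1 := by omega
    have hins : Finset.univ.filter (fun j : Fin (m-1) => (j:ℕ) < k+1)
        = insert (⟨k, hkm⟩ : Fin (m-1))
            (Finset.univ.filter (fun j : Fin (m-1) => (j:ℕ) < k)) := by
      ext j
      simp only [Finset.mem_filter, Finset.mem_insert, Finset.mem_univ, true_and,
        Fin.ext_iff]
      omega
    rw [hins, Finset.sum_insert (by simp), ih (by omega)]
    abel

set_option maxHeartbeats 1000000 in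
/-- The final real-number computation. -/
lemma final_real (β ε : ℝ) (hβ1 : 1 ≤ β) (hε0 : 0 < ε)
    (hεs : ε < Real.exp (-(150 * β ^ 2)))
    (n b m : ℕ) (hn : 1 ≤ n) (hm1 : 1 ≤ m) (hb : (b:ℝ) ≤ β)
    (hnm : (n:ℝ) ≤ 25*β^2*m) :
    (((2*(2*b)+1)^2 * (7^(m-1) * 4^(2*n+4*b*m)) : ℕ) : ℝ) * ε^m
      ≤ ε ^ ((n:ℝ)/(60*β^2)) := by
  have hβ0 : (0:ℝ) < β := by linarith
  have hβ2 : (1:ℝ) ≤ β^2 := by nlinarith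
  set t : ℝ := -Real.log ε with htdef
  have ht : 150*β^2 < t := by
    have h := Real.log_lt_log hε0 hεs
    rw [Real.log_exp] at h
    rw [htdef]
    linarith
  set N : ℕ := (2*(2*b)+1)^2 * (7^(m-1) * 4^(2*n+4*b*m)) with hNdef
  have hN0 : 0 < N := by positivity
  have hNr : (0:ℝ) < (N:ℝ) := by exact_mod_cast hN0
  have hNcast : (N:ℝ) = ((4*(b:ℝ)+1))^2 * ((7:ℝ)^(m-1) * (4:ℝ)^(2*n+4*b*m)) := by
    rw [hNdef]; push_cast; ring_nf
  have hlogN : Real.log N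
      = 2*Real.log (4*(b:ℝ)+1) + ((m-1:ℕ):ℝ)*Real.log 7
        + ((2*n+4*b*m : ℕ):ℝ)*Real.log 4 := by
    rw [hNcast, Real.log_mul (by positivity) (by positivity),
      Real.log_mul (by positivity) (by positivity), Real.log_pow, Real.log_pow,
      Real.log_pow]
    push_cast
    ring
  -- numeric bounds on the logarithms
  have hlog2 : Real.log 2 < 0.7 := by
    have := Real.log_two_lt_d9
    linarith
  have hlog2_0 : 0 < Real.log 2 := Real.log_pos (by norm_num)
  have hlog7 : Real.log 7 ≤ 2.1 := by
    have h8 : Real.log 7 ≤ Real.log 8 := Real.log_le_log (by norm_num) (by norm_num)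
    have h9 : Real.log 8 = 3 * Real.log 2 := by
      rw [show (8:ℝ) = 2^3 by norm_num, Real.log_pow]; push_cast; ring
    linarith
  have hlog4 : Real.log 4 ≤ 1.4 := by
    have h9 : Real.log 4 = 2 * Real.log 2 := by
      rw [show (4:ℝ) = 2^2 by norm_num, Real.log_pow]; push_cast; ring
    linarith
  have hlog4b : Real.log (4*(b:ℝ)+1) ≤ 2.1 + (β - 1) := by
    have h1 : (4*(b:ℝ)+1) ≤ 5*β := by linarith
    have h2 : Real.log (4*(b:ℝ)+1) ≤ Real.log (5*β) :=
      Real.log_le_log (by positivity) h1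
    have h3 : Real.log (5*β) = Real.log 5 + Real.log β :=
      Real.log_mul (by norm_num) (by positivity)
    have h4 : Real.log 5 ≤ 2.1 := by
      have h8 : Real.log 5 ≤ Real.log 8 := Real.log_le_log (by norm_num) (by norm_num)
      have h9 : Real.log 8 = 3 * Real.log 2 := by
        rw [show (8:ℝ) = 2^3 by norm_num, Real.log_pow]; push_cast; ring
      linarith
    have h5 : Real.log β ≤ β - 1 := Real.log_le_sub_one_of_pos hβ0
    linarith
  have hm1r : (1:ℝ) ≤ (m:ℝ) := by exact_mod_cast hm1
  have hm0 : (0:ℝ) ≤ (m:ℝ) := Nat.cast_nonneg m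
  have hcast1 : ((m-1:ℕ):ℝ) ≤ (m:ℝ) := by
    have : (m-1:ℕ) ≤ m := Nat.sub_le m 1
    exact_mod_cast this
  have hcast1' : (0:ℝ) ≤ ((m-1:ℕ):ℝ) := Nat.cast_nonneg _
  have hcast2 : ((2*n+4*b*m : ℕ):ℝ) = 2*(n:ℝ) + 4*(b:ℝ)*(m:ℝ) := by push_cast; ring
  have hlog7_0 : 0 ≤ Real.log 7 := Real.log_nonneg (by norm_num)
  have hlog4_0 : 0 ≤ Real.log 4 := Real.log_nonneg (by norm_num)
  have hββ2 : β ≤ β^2 := by nlinarith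
  have hbm : (b:ℝ)*(m:ℝ) ≤ β^2*(m:ℝ) :=
    mul_le_mul_of_nonneg_right (hb.trans hββ2) hm0
  have hmw : (m:ℝ) ≤ β^2*(m:ℝ) := le_mul_of_one_le_left hm0 hβ2
  have hw1 : (1:ℝ) ≤ β^2*(m:ℝ) :=
    le_trans hβ2 (le_mul_of_one_le_right (by positivity) hm1r)
  have hβb : β - 1 ≤ β^2*(m:ℝ) := by nlinarith
  have hlogNle : Real.log N ≤ 87.5 * (β^2*(m:ℝ)) := by
    rw [hlogN, hcast2]
    have e2 : ((m-1:ℕ):ℝ)*Real.log 7 ≤ (m:ℝ)*2.1 :=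
      mul_le_mul hcast1 hlog7 hlog7_0 hm0
    have e3 : (2*(n:ℝ) + 4*(b:ℝ)*(m:ℝ))*Real.log 4
        ≤ (2*(n:ℝ) + 4*(b:ℝ)*(m:ℝ))*1.4 :=
      mul_le_mul_of_nonneg_left hlog4 (by positivity)
    have e4 : (n:ℝ) ≤ 25*(β^2*(m:ℝ)) := by linarith [hnm]
    linarith [hlog4b, e2, e3, e4, hbm, hmw, hβb, hw1]
  -- the entropy-energy comparison
  have hα : (n:ℝ)/(60*β^2) ≤ (5/12)*(m:ℝ) := by
    rw [div_le_iff₀ (by positivity)]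
    linarith [hnm]
  have hα0 : 0 ≤ (n:ℝ)/(60*β^2) := by positivity
  have hkey : Real.log N + (m:ℝ) * Real.log ε ≤ Real.log ε * ((n:ℝ)/(60*β^2)) := by
    have hma : (7:ℝ)/12*m ≤ (m:ℝ) - (n:ℝ)/(60*β^2) := by linarith
    have h1 : ((7:ℝ)/12*m) * (150*β^2) ≤ ((m:ℝ) - (n:ℝ)/(60*β^2)) * t :=
      mul_le_mul hma ht.le (by positivity) (le_trans (by positivity) hma)
    have h2 : ((7:ℝ)/12*m) * (150*β^2) = 87.5 * (β^2*(m:ℝ)) := by ring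
    have hlogε : Real.log ε = -t := by rw [htdef]; ring
    rw [hlogε]
    linarith [h1, h2, hlogNle]
  calc (N:ℝ) * ε^m = Real.exp (Real.log N) * Real.exp ((m:ℝ) * Real.log ε) := by
        rw [Real.exp_log hNr]
        congr 1
        rw [← Real.log_pow, Real.exp_log (pow_pos hε0 m)]
    _ = Real.exp (Real.log N + (m:ℝ) * Real.log ε) := by rw [← Real.exp_add]
    _ ≤ Real.exp (Real.log ε * ((n:ℝ)/(60*β^2))) := Real.exp_le_exp.mpr hkey
    _ = ε ^ ((n:ℝ)/(60*β^2)) := (Real.rpow_def_of_pos hε0 _).symm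

end BP

open MeasureTheory

set_option maxHeartbeats 1000000 in
/-- **Theorem 4.12 (Exponential decay for the cluster size).** Let `U` be a
two-dimensional update family whose stable set is all of `S¹`, with dilation radius
`β ≥ 1`. Let `μ` be the Bernoulli product measure `ℙ_ε = ⊗_{v ∈ ℤ²} Ber(ε)` on
configurations `ω : ℤ² → Bool` (characterized by its cylinder probabilities), where
`0 < ε < e^{−150β²}`, and let `C = −(1/(60β²)) log ε`. Then for every `n ∈ ℕ`,
`ℙ_ε(|K| ≥ n) ≤ ε^{n/(60β²)} = e^{−Cn}`. -/
theorem statement1 (U : Finset (Finset V2)) (hU0 : ∀ X ∈ U, ((0, 0) : V2) ∉ X)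
    (hS : StableAll U) (β : ℝ) (hβ1 : 1 ≤ β) (hβ : DilationProp U β)
    (ε : ℝ) (hε0 : 0 < ε) (hεs : ε < Real.exp (-(150 * β ^ 2)))
    (C : ℝ) (hC : C = -(1 / (60 * β ^ 2)) * Real.log ε)
    (μ : Measure (V2 → Bool)) [IsProbabilityMeasure μ]
    (hμ : ∀ (F : Finset V2) (f : V2 → Bool),
      μ {ω | ∀ v ∈ F, ω v = f v} =
        ∏ v ∈ F, (if f v then ENNReal.ofReal ε else ENNReal.ofReal (1 - ε)))
    (n : ℕ) :
    μ {ω | (n : ℕ∞) ≤ (cluster U {v | ω v = true}).encard} ≤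
        ENNReal.ofReal (ε ^ ((n : ℝ) / (60 * β ^ 2))) ∧
      ε ^ ((n : ℝ) / (60 * β ^ 2)) = Real.exp (-(C * n)) := by
  have hid : ε ^ ((n : ℝ) / (60 * β ^ 2)) = Real.exp (-(C * n)) := by
    rw [Real.rpow_def_of_pos hε0, hC]
    congr 1
    ring
  refine ⟨?_, hid⟩
  by_cases hn : n = 0
  · subst hn
    simp only [Nat.cast_zero, zero_div, Real.rpow_zero, ENNReal.ofReal_one]
    exact prob_le_one
  · have hn1 : 1 ≤ n := Nat.one_le_iff_ne_zero.mpr hn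
    have hβ0 : (0:ℝ) < β := by linarith
    set b : ℕ := ⌊β⌋₊ with hbdef
    set m : ℕ := max 1 ⌈(n:ℝ)/(25*β^2)⌉₊ with hmdef
    have hm1 : 1 ≤ m := le_max_left _ _
    have hm2 : ∀ k : ℕ, 1 ≤ k → (n:ℝ) ≤ 25*β^2*k → m ≤ k := by
      intro k hk1 hk2
      rw [hmdef]
      refine max_le hk1 ?_
      rw [Nat.ceil_le, div_le_iff₀ (by positivity)]
      linarith [hk2]
    have hnm' : (n:ℝ) ≤ 25*β^2*m := by
      have h1 : (n:ℝ)/(25*β^2) ≤ (m:ℝ) :=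
        le_trans (Nat.le_ceil _) (Nat.cast_le.mpr (le_max_right _ _))
      rw [div_le_iff₀ (by positivity)] at h1
      linarith
    set E : (V2 × (Fin (m-1) → V2)) → Set (V2 → Bool) :=
      fun c => {ω | ∀ i : Fin m, ω (BP.dec m c i) = true} with hEdef
    set CodeF : Finset (V2 × (Fin (m-1) → V2)) :=
      ((BP.box (2*b)) ×ˢ BP.T (2*n+4*b*m) (m-1)).filter
        (fun c => Function.Injective (BP.dec m c)) with hCdef
    have hsubev : {ω : V2 → Bool | (n : ℕ∞) ≤ (cluster U {v | ω v = true}).encard}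
        ⊆ ⋃ c ∈ CodeF, E c := by
      intro ω hω
      obtain ⟨y, hyA, hyinj, hy0, hysteps⟩ :=
        BP.extract U {v | ω v = true} β hβ1 hβ n b m (2*n+4*b*m) hn1 (le_refl _)
          hm1 hm2 (le_refl _) hω
      have hdec : ∀ i : Fin m,
          BP.dec m (y 0, fun j : Fin (m-1) => y ((j:ℕ)+1) - y (j:ℕ)) i = y (i:ℕ) :=
        BP.dec_eq m y
      have hcmem : (y 0, fun j : Fin (m-1) => y ((j:ℕ)+1) - y (j:ℕ)) ∈ CodeF := by
        rw [hCdef, Finset.mem_filter, Finset.mem_product]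
        refine ⟨⟨hy0, hysteps⟩, ?_⟩
        intro i j hij
        rw [hdec i, hdec j] at hij
        by_contra hne
        exact hyinj (i:ℕ) i.2 (j:ℕ) j.2 (fun hc => hne (Fin.ext hc)) hij
      refine Set.mem_biUnion hcmem ?_
      intro i
      rw [hdec i]
      exact hyA (i:ℕ) i.2
    have hμbound : ∀ c ∈ CodeF, μ (E c) ≤ ENNReal.ofReal ε ^ m := by
      intro c hc
      rw [hCdef, Finset.mem_filter] at hc
      have hinj : Function.Injective (BP.dec m c) := hc.2
      have hE : E c = {ω | ∀ v ∈ Finset.image (BP.dec m c) Finset.univ, ω v = true} := by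
        ext ω
        simp only [hEdef, Set.mem_setOf_eq, Finset.mem_image, Finset.mem_univ, true_and]
        constructor
        · rintro h v ⟨i, rfl⟩
          exact h i
        · intro h i
          exact h _ ⟨i, rfl⟩
      rw [hE, hμ _ (fun _ => true)]
      have hcard : (Finset.image (BP.dec m c) Finset.univ).card = m := by
        rw [Finset.card_image_of_injective _ hinj, Finset.card_univ, Fintype.card_fin]
      apply le_of_eq
      calc (∏ v ∈ Finset.image (BP.dec m c) Finset.univ,
            (if (fun _ : V2 => true) v then ENNReal.ofReal ε else ENNReal.ofReal (1-ε)))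
          = ∏ v ∈ Finset.image (BP.dec m c) Finset.univ, ENNReal.ofReal ε := by
            apply Finset.prod_congr rfl
            intro v _
            rfl
        _ = ENNReal.ofReal ε ^ m := by rw [Finset.prod_const, hcard]
    have hcard_bound : CodeF.card ≤ (2*(2*b)+1)^2 * (7^(m-1) * 4^(2*n+4*b*m)) := by
      calc CodeF.card ≤ ((BP.box (2*b)) ×ˢ BP.T (2*n+4*b*m) (m-1)).card := by
            rw [hCdef]; exact Finset.card_filter_le _ _
        _ = (BP.box (2*b)).card * (BP.T (2*n+4*b*m) (m-1)).card :=
            Finset.card_product _ _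
        _ ≤ (2*(2*b)+1)^2 * (7^(m-1) * 4^(2*n+4*b*m)) := by
            rw [BP.card_box]
            exact Nat.mul_le_mul_left _ (BP.card_T (m-1) (2*n+4*b*m))
    calc μ {ω | (n : ℕ∞) ≤ (cluster U {v | ω v = true}).encard}
        ≤ μ (⋃ c ∈ CodeF, E c) := measure_mono hsubev
      _ ≤ ∑ c ∈ CodeF, μ (E c) := measure_biUnion_finset_le _ _
      _ ≤ ∑ _c ∈ CodeF, ENNReal.ofReal ε ^ m := Finset.sum_le_sum hμbound
      _ = CodeF.card * (ENNReal.ofReal ε ^ m) := by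
          rw [Finset.sum_const, nsmul_eq_mul]
      _ ≤ (((2*(2*b)+1)^2 * (7^(m-1) * 4^(2*n+4*b*m)) : ℕ) : ENNReal)
            * (ENNReal.ofReal ε ^ m) := by
          apply mul_le_mul_left
          exact_mod_cast Nat.cast_le.mpr hcard_bound
      _ = ENNReal.ofReal ((((2*(2*b)+1)^2 * (7^(m-1) * 4^(2*n+4*b*m)) : ℕ) : ℝ) * ε^m) := by
          rw [ENNReal.ofReal_mul (by positivity), ENNReal.ofReal_natCast,
            ENNReal.ofReal_pow hε0.le]
      _ ≤ ENNReal.ofReal (ε ^ ((n:ℝ)/(60*β^2))) :=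
          ENNReal.ofReal_le_ofReal
            (BP.final_real β ε hβ1 hε0 hεs n b m hn1 hm1 (Nat.floor_le hβ0.le) hnm')
end

section
/- Fix integers 1 ≤ a ≤ b ≤ c and consider N_{c+1}^{a,b,c}-bootstrap percolation. For all h, w ≥ c and all sufficiently small p > 0, the conditional probability satisfies ℙ_p(I(h, w+1) | I(h, w)) ≥ 1 − e^{−p·h²}. -/
open scoped Classical

/-- Vertices of the three-dimensional lattice. -/
abbrev V3 : Type := ℤ × ℤ × ℤ

/-- The anisotropic neighbourhood `N_{a,b,c} ⊂ ℤ³`: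
nonzero multiples of `e₁` up to `a`, of `e₂` up to `b`, of `e₃` up to `c`. -/
def N3 (a b c : ℕ) : Set V3 :=
  {u | (u.1 ≠ 0 ∧ |u.1| ≤ (a : ℤ) ∧ u.2.1 = 0 ∧ u.2.2 = 0) ∨
       (u.2.1 ≠ 0 ∧ |u.2.1| ≤ (b : ℤ) ∧ u.1 = 0 ∧ u.2.2 = 0) ∨
       (u.2.2 ≠ 0 ∧ |u.2.2| ≤ (c : ℤ) ∧ u.1 = 0 ∧ u.2.1 = 0)}

/-- One step of the `r`-neighbour bootstrap dynamics inside the region `dom`: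
a healthy vertex of `dom` becomes infected when it has at least `r` infected
neighbours (its neighbours being its translates by `N_{a,b,c}`). -/
def step3 (a b c r : ℕ) (dom S : Set V3) : Set V3 :=
  S ∪ {x | x ∈ dom ∧ r ≤ {u | u ∈ N3 a b c ∧ x + u ∈ S}.ncard}

/-- The closure `⟨A⟩` of `A` under the `N_r^{a,b,c}`-bootstrap process in `dom`. -/
def closure3 (a b c r : ℕ) (dom A : Set V3) : Set V3 :=
  ⋃ n, (step3 a b c r dom)^[n] (A ∩ dom)

/-- The rectangle `[x]×[y]×[z]` as a finset of `ℤ³`. -/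
noncomputable def rectF (x y z : ℕ) : Finset V3 :=
  Finset.Icc (1 : ℤ) (x : ℤ) ×ˢ (Finset.Icc (1 : ℤ) (y : ℤ) ×ˢ Finset.Icc (1 : ℤ) (z : ℤ))

/-- The rectangle `[x]×[y]×[z]` as a set. -/
def rect (x y z : ℕ) : Set V3 := ↑(rectF x y z)

/-- The event `I•(R)`: the region `R` is internally filled by the initial set `A`,
i.e. `R ⊆ ⟨A ∩ R⟩` for the process restricted to `R`. -/
def IFill (a b c r : ℕ) (R : Set V3) (A : Finset V3) : Prop :=
  R ⊆ closure3 a b c r R ↑A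

/-- The probability of the event `E` under the Bernoulli product measure with
density `p` on subsets of the finite vertex set `D`. -/
noncomputable def PP {α : Type*} [DecidableEq α] (D : Finset α) (p : ℝ)
    (E : Finset α → Prop) : ℝ :=
  ∑ A ∈ D.powerset, if E A then p ^ A.card * (1 - p) ^ (D.card - A.card) else 0

/-- Conditional probability `ℙ_p(E | F)`. -/
noncomputable def PPc {α : Type*} [DecidableEq α] (D : Finset α) (p : ℝ)
    (E F : Finset α → Prop) : ℝ :=
  PP D p (fun A => E A ∧ F A) / PP D p F


lemma N3_finite (a b c : ℕ) : (N3 a b c).Finite := by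
  apply Set.Finite.subset
    ((Finset.Icc (-(a:ℤ)) a ×ˢ Finset.Icc (-(b:ℤ)) b ×ˢ Finset.Icc (-(c:ℤ)) c).finite_toSet)
  rintro ⟨x, y, z⟩ hu
  simp only [N3, Set.mem_setOf_eq] at hu
  simp only [Finset.coe_product, Set.mem_prod, Finset.mem_coe, Finset.mem_Icc]
  rcases hu with ⟨h1, h2, h3, h4⟩ | ⟨h1, h2, h3, h4⟩ | ⟨h1, h2, h3, h4⟩ <;>
    rw [abs_le] at h2 <;> refine ⟨⟨?_, ?_⟩, ⟨?_, ?_⟩, ?_, ?_⟩ <;> omega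

lemma nbr_finite (a b c : ℕ) (x : V3) (S : Set V3) :
    {u | u ∈ N3 a b c ∧ x + u ∈ S}.Finite :=
  (N3_finite a b c).subset (fun u hu => hu.1)

lemma step3_mono (a b c r : ℕ) {dom dom' S S' : Set V3} (hd : dom ⊆ dom') (hS : S ⊆ S') :
    step3 a b c r dom S ⊆ step3 a b c r dom' S' := by
  rintro x (hx | ⟨hx1, hx2⟩)
  · exact Or.inl (hS hx)
  · refine Or.inr ⟨hd hx1, le_trans hx2 ?_⟩
    exact Set.ncard_le_ncard (fun u hu => ⟨hu.1, hS hu.2⟩) (nbr_finite a b c x S')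

lemma subset_step3 (a b c r : ℕ) (dom S : Set V3) : S ⊆ step3 a b c r dom S :=
  Set.subset_union_left

lemma iter_mono_n (a b c r : ℕ) (dom X : Set V3) :
    Monotone (fun n => (step3 a b c r dom)^[n] X) := by
  apply monotone_nat_of_le_succ
  intro n
  rw [Function.iterate_succ_apply']
  exact subset_step3 a b c r dom _

lemma inter_subset_closure3 (a b c r : ℕ) (dom A : Set V3) :
    A ∩ dom ⊆ closure3 a b c r dom A :=
  Set.subset_iUnion (fun n => (step3 a b c r dom)^[n] (A ∩ dom)) 0

lemma closure3_mono (a b c r : ℕ) {dom dom' A A' : Set V3} (hd : dom ⊆ dom') (hA : A ⊆ A') :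
    closure3 a b c r dom A ⊆ closure3 a b c r dom' A' := by
  apply Set.iUnion_mono
  intro n
  induction n with
  | zero => exact Set.inter_subset_inter hA hd
  | succ n ih =>
      rw [Function.iterate_succ_apply', Function.iterate_succ_apply']
      exact step3_mono a b c r hd ih

lemma exists_iter_bound {α : Type*} {T : Set α} (hT : T.Finite) (C : ℕ → Set α)
    (hmono : Monotone C) (h : ∀ u ∈ T, ∃ n, u ∈ C n) : ∃ N, ∀ u ∈ T, u ∈ C N := by
  have h' : ∀ u : T, ∃ n, (u : α) ∈ C n := fun u => h u u.2
  choose f hf using h'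
  haveI := hT.fintype
  refine ⟨Finset.univ.sup f, fun u hu => ?_⟩
  exact hmono (Finset.le_sup (Finset.mem_univ (⟨u, hu⟩ : T))) (hf ⟨u, hu⟩)

lemma closure3_closed (a b c r : ℕ) (dom A : Set V3) {x : V3} (hx : x ∈ dom)
    (hcard : r ≤ {u | u ∈ N3 a b c ∧ x + u ∈ closure3 a b c r dom A}.ncard) :
    x ∈ closure3 a b c r dom A := by
  set T := {u | u ∈ N3 a b c ∧ x + u ∈ closure3 a b c r dom A} with hT
  obtain ⟨N, hN⟩ := exists_iter_bound ((N3_finite a b c).subset (fun u hu => hu.1) :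
      T.Finite) (fun n => {u : V3 | x + u ∈ (step3 a b c r dom)^[n] (A ∩ dom)})
    (fun m n hmn u hu => iter_mono_n a b c r dom (A ∩ dom) hmn hu)
    (fun u hu => by
      obtain ⟨s, ⟨n, rfl⟩, hs⟩ := hu.2
      exact ⟨n, hs⟩)
  have hx' : x ∈ (step3 a b c r dom)^[N + 1] (A ∩ dom) := by
    rw [Function.iterate_succ_apply']
    refine Or.inr ⟨hx, le_trans hcard ?_⟩
    refine Set.ncard_le_ncard (fun u hu => ⟨hu.1, hN u hu⟩) ?_
    exact (N3_finite a b c).subset (fun u hu => hu.1)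
  exact Set.mem_iUnion.2 ⟨N + 1, hx'⟩

lemma mem_rect {x y z : ℕ} {vx vy vz : ℤ} :
    (vx, vy, vz) ∈ rect x y z ↔ (1 ≤ vx ∧ vx ≤ x) ∧ (1 ≤ vy ∧ vy ≤ y) ∧ (1 ≤ vz ∧ vz ≤ z) := by
  simp [rect, rectF, Finset.mem_Icc, Finset.mem_product, Prod.le_def, and_assoc]
  tauto

lemma fill_step (a b c : ℕ) (h w : ℕ) (hcw : c ≤ w) (A : Set V3)
    (hbase : rect h h w ⊆ closure3 a b c (c+1) (rect h h (w+1)) A)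
    {x y : ℤ} (hx1 : 1 ≤ x) (hx2 : x ≤ h) (hy1 : 1 ≤ y) (hy2 : y ≤ h)
    {u0 : V3} (hu0 : u0 ∈ N3 a b c) (hu0z : u0.2.2 = 0)
    (hC : (x, y, (w:ℤ)+1) + u0 ∈ closure3 a b c (c+1) (rect h h (w+1)) A) :
    (x, y, (w:ℤ)+1) ∈ closure3 a b c (c+1) (rect h h (w+1)) A := by
  set C := closure3 a b c (c+1) (rect h h (w+1)) A with hCdef
  apply closure3_closed
  · rw [mem_rect]
    refine ⟨⟨hx1, hx2⟩, ⟨hy1, hy2⟩, by omega, by push_cast; omega⟩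
  · set T : Finset V3 := insert u0 ((Finset.Icc 1 c).image fun k : ℕ => ((0:ℤ), (0:ℤ), -(k:ℤ)))
      with hTdef
    have himg : ∀ v ∈ (Finset.Icc 1 c).image fun k : ℕ => ((0:ℤ), (0:ℤ), -(k:ℤ)),
        v.1 = 0 ∧ v.2.1 = 0 ∧ v.2.2 ≠ 0 ∧ -(c:ℤ) ≤ v.2.2 ∧ v.2.2 ≤ -1 := by
      intro v hv
      simp only [Finset.mem_image, Finset.mem_Icc] at hv
      obtain ⟨k, ⟨hk1, hk2⟩, rfl⟩ := hv
      refine ⟨rfl, rfl, by simp; omega, by simp; omega, by simp; omega⟩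
    have hcardT : T.card = c + 1 := by
      rw [hTdef, Finset.card_insert_of_notMem, Finset.card_image_of_injective,
        Nat.card_Icc]
      · omega
      · intro k l hkl
        simpa using congrArg (fun v : V3 => v.2.2) hkl
      · intro hmem
        obtain ⟨h1, h2, h3, _⟩ := himg u0 hmem
        rcases hu0 with ⟨e1, _⟩ | ⟨e1, _⟩ | ⟨e1, _⟩
        · exact e1 h1
        · exact e1 h2
        · exact e1 hu0z
    have hsub : (T : Set V3) ⊆ {u | u ∈ N3 a b c ∧ (x, y, (w:ℤ)+1) + u ∈ C} := by
      intro u hu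
      rw [hTdef] at hu
      simp only [Finset.coe_insert, Set.mem_insert_iff] at hu
      rcases hu with rfl | hu
      · exact ⟨hu0, hC⟩
      · rw [Finset.mem_coe, Finset.mem_image] at hu
        obtain ⟨k, hk, rfl⟩ := hu
        rw [Finset.mem_Icc] at hk
        constructor
        · refine Or.inr (Or.inr ⟨by simp; omega, by rw [abs_le]; constructor <;> simp <;> omega,
            rfl, rfl⟩)
        · apply hbase
          rw [mem_rect]
          refine ⟨⟨by simpa using hx1, by simpa using hx2⟩,
            ⟨by simpa using hy1, by simpa using hy2⟩, ?_, ?_⟩ <;> simp <;> omega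
    calc c + 1 = (T : Set V3).ncard := by rw [Set.ncard_coe_finset, hcardT]
    _ ≤ _ := Set.ncard_le_ncard hsub ((N3_finite a b c).subset (fun u hu => hu.1))

lemma layer_fill (a b c : ℕ) (ha : 1 ≤ a) (hab : a ≤ b) (hbc : b ≤ c)
    (h w : ℕ) (hcw : c ≤ w) (A : Set V3)
    (hbase : rect h h w ⊆ closure3 a b c (c+1) (rect h h (w+1)) A)
    {x0 y0 : ℤ} (hx01 : 1 ≤ x0) (hx02 : x0 ≤ h) (hy01 : 1 ≤ y0) (hy02 : y0 ≤ h)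
    (hseed : (x0, y0, (w:ℤ)+1) ∈ closure3 a b c (c+1) (rect h h (w+1)) A) :
    ∀ x y : ℤ, 1 ≤ x → x ≤ h → 1 ≤ y → y ≤ h →
      (x, y, (w:ℤ)+1) ∈ closure3 a b c (c+1) (rect h h (w+1)) A := by
  have hN1 : ((1:ℤ), (0:ℤ), (0:ℤ)) ∈ N3 a b c := Or.inl ⟨one_ne_zero, by simp; omega, rfl, rfl⟩
  have hN1' : ((-1:ℤ), (0:ℤ), (0:ℤ)) ∈ N3 a b c := Or.inl ⟨by norm_num, by simp; omega, rfl, rfl⟩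
  have hN2 : ((0:ℤ), (1:ℤ), (0:ℤ)) ∈ N3 a b c :=
    Or.inr (Or.inl ⟨one_ne_zero, by simp; omega, rfl, rfl⟩)
  have hN2' : ((0:ℤ), (-1:ℤ), (0:ℤ)) ∈ N3 a b c :=
    Or.inr (Or.inl ⟨by norm_num, by simp; omega, rfl, rfl⟩)
  have hrow : ∀ x : ℤ, 1 ≤ x → x ≤ h →
      (x, y0, (w:ℤ)+1) ∈ closure3 a b c (c+1) (rect h h (w+1)) A := by
    have hup : ∀ x : ℤ, x0 ≤ x → x ≤ (h:ℤ) →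
        (x, y0, (w:ℤ)+1) ∈ closure3 a b c (c+1) (rect h h (w+1)) A := by
      refine Int.le_induction (fun _ => hseed) ?_
      intro n hn ih hnh
      apply fill_step a b c h w hcw A hbase (by omega) hnh hy01 hy02 hN1' rfl
      have e : (n + 1, y0, (w:ℤ)+1) + ((-1:ℤ), (0:ℤ), (0:ℤ)) = (n, y0, (w:ℤ)+1) := by
        simp [Prod.ext_iff]
      rw [e]
      exact ih (by omega)
    have hdown : ∀ x : ℤ, x ≤ x0 → 1 ≤ x →
        (x, y0, (w:ℤ)+1) ∈ closure3 a b c (c+1) (rect h h (w+1)) A := by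
      refine Int.le_induction_down (fun _ => hseed) ?_
      intro n hn ih hn1
      apply fill_step a b c h w hcw A hbase hn1 (by omega) hy01 hy02 hN1 rfl
      have e : (n - 1, y0, (w:ℤ)+1) + ((1:ℤ), (0:ℤ), (0:ℤ)) = (n, y0, (w:ℤ)+1) := by
        simp [Prod.ext_iff]
      rw [e]
      exact ih (by omega)
    intro x hx1 hx2
    rcases le_total x x0 with hle | hle
    · exact hdown x hle hx1
    · exact hup x hle hx2
  intro x y hx1 hx2 hy1 hy2
  have hup : ∀ y : ℤ, y0 ≤ y → y ≤ (h:ℤ) →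
      (x, y, (w:ℤ)+1) ∈ closure3 a b c (c+1) (rect h h (w+1)) A := by
    refine Int.le_induction (fun _ => hrow x hx1 hx2) ?_
    intro n hn ih hnh
    apply fill_step a b c h w hcw A hbase hx1 hx2 (by omega) hnh hN2' rfl
    have e : (x, n + 1, (w:ℤ)+1) + ((0:ℤ), (-1:ℤ), (0:ℤ)) = (x, n, (w:ℤ)+1) := by
      simp [Prod.ext_iff]
    rw [e]
    exact ih (by omega)
  have hdown : ∀ y : ℤ, y ≤ y0 → 1 ≤ y →
      (x, y, (w:ℤ)+1) ∈ closure3 a b c (c+1) (rect h h (w+1)) A := by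
    refine Int.le_induction_down (fun _ => hrow x hx1 hx2) ?_
    intro n hn ih hn1
    apply fill_step a b c h w hcw A hbase hx1 hx2 hn1 (by omega) hN2 rfl
    have e : (x, n - 1, (w:ℤ)+1) + ((0:ℤ), (1:ℤ), (0:ℤ)) = (x, n, (w:ℤ)+1) := by
      simp [Prod.ext_iff]
    rw [e]
    exact ih (by omega)
  rcases le_total y y0 with hle | hle
  · exact hdown y hle hy1
  · exact hup y hle hy2

lemma PP_term_nonneg {p : ℝ} (hp : 0 ≤ p) (hq : p ≤ 1) (P : Prop) (n m : ℕ) :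
    0 ≤ if P then p ^ n * (1 - p) ^ m else 0 := by
  split
  · exact mul_nonneg (pow_nonneg hp n) (pow_nonneg (by linarith) m)
  · exact le_refl _

lemma PP_nonneg {α : Type*} [DecidableEq α] (D : Finset α) {p : ℝ} (hp : 0 ≤ p) (hq : p ≤ 1)
    (E : Finset α → Prop) : 0 ≤ PP D p E :=
  Finset.sum_nonneg fun A _ => PP_term_nonneg hp hq _ _ _

lemma PP_mono {α : Type*} [DecidableEq α] (D : Finset α) {p : ℝ} (hp : 0 ≤ p) (hq : p ≤ 1)
    {E F : Finset α → Prop} (h : ∀ A ∈ D.powerset, E A → F A) : PP D p E ≤ PP D p F := by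
  apply Finset.sum_le_sum
  intro A hA
  by_cases hE : E A
  · rw [if_pos hE, if_pos (h A hA hE)]
  · simp only [hE, if_false]
    exact PP_term_nonneg hp hq _ _ _

lemma PP_split {α : Type*} [DecidableEq α] (D : Finset α) (p : ℝ)
    (F G : Finset α → Prop) :
    PP D p F = PP D p (fun A => F A ∧ G A) + PP D p (fun A => F A ∧ ¬ G A) := by
  unfold PP
  rw [← Finset.sum_add_distrib]
  apply Finset.sum_congr rfl
  intro A _
  by_cases hF : F A <;> by_cases hG : G A <;> simp [hF, hG]

lemma sum_powerset_union {α : Type*} [DecidableEq α] {s t : Finset α} (hd : Disjoint s t)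
    (g : Finset α → ℝ) :
    ∑ A ∈ (s ∪ t).powerset, g A = ∑ B ∈ s.powerset, ∑ C ∈ t.powerset, g (B ∪ C) := by
  rw [← Finset.sum_product']
  refine (Finset.sum_nbij' (fun BC => BC.1 ∪ BC.2) (fun A => (A ∩ s, A ∩ t)) ?_ ?_ ?_ ?_ ?_).symm
  · rintro ⟨B, C⟩ hBC
    rw [Finset.mem_product] at hBC
    rw [Finset.mem_powerset]
    exact Finset.union_subset (le_trans (Finset.mem_powerset.1 hBC.1) Finset.subset_union_left)
      (le_trans (Finset.mem_powerset.1 hBC.2) Finset.subset_union_right)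
  · intro A hA
    rw [Finset.mem_product]
    exact ⟨Finset.mem_powerset.2 Finset.inter_subset_right,
      Finset.mem_powerset.2 Finset.inter_subset_right⟩
  · rintro ⟨B, C⟩ hBC
    rw [Finset.mem_product, Finset.mem_powerset, Finset.mem_powerset] at hBC
    obtain ⟨h1, h2⟩ := hBC
    dsimp only at h1 h2
    have hB : (B ∪ C) ∩ s = B := by
      rw [Finset.union_inter_distrib_right, Finset.inter_eq_left.2 h1,
        (Finset.disjoint_iff_inter_eq_empty.1 (hd.symm.mono_left h2)), Finset.union_empty]
    have hC : (B ∪ C) ∩ t = C := by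
      rw [Finset.union_inter_distrib_right, (Finset.disjoint_iff_inter_eq_empty.1 (hd.mono_left h1)),
        Finset.inter_eq_left.2 h2, Finset.empty_union]
    simp [hB, hC]
  · intro A hA
    rw [Finset.mem_powerset] at hA
    simp only []
    rw [← Finset.inter_union_distrib_left, Finset.inter_eq_left.2 hA]
  · rintro ⟨B, C⟩ _
    rfl

lemma sum_ber {α : Type*} [DecidableEq α] (t : Finset α) (p : ℝ) :
    ∑ C ∈ t.powerset, p ^ C.card * (1 - p) ^ (t.card - C.card) = 1 := by
  induction t using Finset.induction with
  | empty => simp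
  | @insert x tt ha ih =>
      rw [Finset.sum_powerset_insert ha]
      have h1 : ∀ C ∈ tt.powerset,
          p ^ C.card * (1 - p) ^ ((insert x tt).card - C.card)
            = (1 - p) * (p ^ C.card * (1 - p) ^ (tt.card - C.card)) := by
        intro C hC
        rw [Finset.card_insert_of_notMem ha]
        have : tt.card + 1 - C.card = (tt.card - C.card) + 1 := by
          have := Finset.card_le_card (Finset.mem_powerset.1 hC)
          omega
        rw [this, pow_succ]
        ring
      have h2 : ∀ C ∈ tt.powerset,
          p ^ (insert x C).card * (1 - p) ^ ((insert x tt).card - (insert x C).card)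
            = p * (p ^ C.card * (1 - p) ^ (tt.card - C.card)) := by
        intro C hC
        rw [Finset.card_insert_of_notMem ha, Finset.card_insert_of_notMem
          (fun hx => ha (Finset.mem_powerset.1 hC hx))]
        have : tt.card + 1 - (C.card + 1) = tt.card - C.card := by omega
        rw [this, pow_succ]
        ring
      rw [Finset.sum_congr rfl h1, Finset.sum_congr rfl h2, ← Finset.mul_sum, ← Finset.mul_sum,
        ih]
      ring

lemma inner_inter_empty {α : Type*} [DecidableEq α] {s t B C : Finset α} (hd : Disjoint s t)
    (hB : B ⊆ s) (hC : C ⊆ t) : (B ∪ C) ∩ t = C := by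
  rw [Finset.union_inter_distrib_right, Finset.disjoint_iff_inter_eq_empty.1 (hd.mono_left hB),
    Finset.inter_eq_left.2 hC, Finset.empty_union]

lemma PP_factor {α : Type*} [DecidableEq α] {s t : Finset α} (hd : Disjoint s t) (p : ℝ)
    (F : Finset α → Prop) (hF : ∀ B ∈ s.powerset, ∀ C ∈ t.powerset, (F (B ∪ C) ↔ F B)) :
    PP (s ∪ t) p F = PP s p F := by
  unfold PP
  rw [sum_powerset_union hd]
  apply Finset.sum_congr rfl
  intro B hB
  have hterm : ∀ C ∈ t.powerset,
      (if F (B ∪ C) then p ^ (B ∪ C).card * (1 - p) ^ ((s ∪ t).card - (B ∪ C).card) else 0)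
        = (if F B then p ^ B.card * (1 - p) ^ (s.card - B.card) else 0)
          * (p ^ C.card * (1 - p) ^ (t.card - C.card)) := by
    intro C hC
    rw [hF B hB C hC]
    by_cases hFB : F B
    · rw [if_pos hFB, if_pos hFB]
      have hc1 : (B ∪ C).card = B.card + C.card :=
        Finset.card_union_of_disjoint
          (hd.mono (Finset.mem_powerset.1 hB) (Finset.mem_powerset.1 hC))
      have hc2 : (s ∪ t).card = s.card + t.card := Finset.card_union_of_disjoint hd
      have e : s.card + t.card - (B.card + C.card)
          = (s.card - B.card) + (t.card - C.card) := by
        have := Finset.card_le_card (Finset.mem_powerset.1 hB)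
        have := Finset.card_le_card (Finset.mem_powerset.1 hC)
        omega
      rw [hc1, hc2, e, pow_add, pow_add]
      ring
    · simp [hFB]
  rw [Finset.sum_congr rfl hterm, ← Finset.mul_sum, sum_ber, mul_one]

lemma PP_factor_empty {α : Type*} [DecidableEq α] {s t : Finset α} (hd : Disjoint s t) (p : ℝ)
    (F : Finset α → Prop) (hF : ∀ B ∈ s.powerset, ∀ C ∈ t.powerset, (F (B ∪ C) ↔ F B)) :
    PP (s ∪ t) p (fun A => F A ∧ A ∩ t = ∅) = (1 - p) ^ t.card * PP s p F := by
  unfold PP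
  rw [sum_powerset_union hd, Finset.mul_sum]
  apply Finset.sum_congr rfl
  intro B hB
  rw [Finset.sum_eq_single_of_mem ∅ (Finset.empty_mem_powerset t)]
  · rw [Finset.union_empty]
    have hcond : (F B ∧ B ∩ t = ∅) ↔ F B := by
      have : B ∩ t = ∅ :=
        Finset.disjoint_iff_inter_eq_empty.1 (hd.mono_left (Finset.mem_powerset.1 hB))
      tauto
    have hc2 : (s ∪ t).card = s.card + t.card := Finset.card_union_of_disjoint hd
    have e : s.card + t.card - B.card = (s.card - B.card) + t.card := by
      have := Finset.card_le_card (Finset.mem_powerset.1 hB)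
      omega
    by_cases hFB : F B
    · rw [if_pos (hcond.2 hFB), if_pos hFB, hc2, e, pow_add]
      ring
    · rw [if_neg (fun hcon => hFB (hcond.1 hcon)), if_neg hFB, mul_zero]
  · intro C hC hCne
    have : (B ∪ C) ∩ t = C :=
      inner_inter_empty hd (Finset.mem_powerset.1 hB) (Finset.mem_powerset.1 hC)
    rw [if_neg]
    rintro ⟨_, hcon⟩
    rw [this] at hcon
    exact hCne hcon

lemma PP_cond_bound {α : Type*} [DecidableEq α] {s t : Finset α} (hd : Disjoint s t) {p : ℝ}
    (hp : 0 < p) (hq : p < 1) (E F : Finset α → Prop)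
    (hF : ∀ B ∈ s.powerset, ∀ C ∈ t.powerset, (F (B ∪ C) ↔ F B))
    (hFs : F s)
    (hEF : ∀ A ∈ (s ∪ t).powerset, F A → A ∩ t ≠ ∅ → E A) :
    1 - (1 - p) ^ t.card ≤ PP (s ∪ t) p (fun A => E A ∧ F A) / PP (s ∪ t) p F := by
  have hS : 0 < PP s p F := by
    apply Finset.sum_pos'
    · intro A _
      exact PP_term_nonneg hp.le hq.le _ _ _
    · refine ⟨s, Finset.mem_powerset_self s, ?_⟩
      rw [if_pos hFs, Nat.sub_self, pow_zero, mul_one]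
      positivity
  have hPF : PP (s ∪ t) p F = PP s p F := PP_factor hd p F hF
  have hempty : PP (s ∪ t) p (fun A => F A ∧ A ∩ t = ∅) = (1 - p) ^ t.card * PP s p F :=
    PP_factor_empty hd p F hF
  have hsplit := PP_split (s ∪ t) p F (fun A => A ∩ t = ∅)
  have hmono : PP (s ∪ t) p (fun A => F A ∧ ¬ (A ∩ t = ∅))
      ≤ PP (s ∪ t) p (fun A => E A ∧ F A) := by
    apply PP_mono _ hp.le hq.le
    rintro A hA ⟨h1, h2⟩
    exact ⟨hEF A hA h1 h2, h1⟩
  rw [le_div_iff₀ (by rw [hPF]; exact hS), hPF]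
  nlinarith [hS, hmono, hsplit, hempty, hPF]

/-- **Lemma 2.2.** For `N_{c+1}^{a,b,c}`-bootstrap percolation and `h, w ≥ c`, if `p` is
small enough then `ℙ_p(I(h, w+1) | I(h, w)) ≥ 1 − e^{−p h²}`, where `I(h,w)` is the event
that `[h]²×[w]` is internally filled. -/
theorem statement3 (a b c : ℕ) (ha : 1 ≤ a) (hab : a ≤ b) (hbc : b ≤ c) :
    ∃ p₀ : ℝ, 0 < p₀ ∧ ∀ p : ℝ, 0 < p → p < p₀ → ∀ h w : ℕ, c ≤ h → c ≤ w →
      1 - Real.exp (-(p * (h : ℝ) ^ 2)) ≤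
        PPc (rectF h h (w + 1)) p
          (IFill a b c (c + 1) (rect h h (w + 1)))
          (IFill a b c (c + 1) (rect h h w)) := by
  refine ⟨1, one_pos, ?_⟩
  intro p hp hp1 h w hch hcw
  set s : Finset V3 := rectF h h w with hs_def
  set t : Finset V3 :=
    Finset.Icc (1:ℤ) (h:ℤ) ×ˢ (Finset.Icc (1:ℤ) (h:ℤ) ×ˢ Finset.Icc ((w:ℤ)+1) ((w:ℤ)+1))
    with ht_def
  have hmem_t : ∀ x y z : ℤ, ((x, y, z) : V3) ∈ t ↔ (1 ≤ x ∧ x ≤ h) ∧ (1 ≤ y ∧ y ≤ h)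
      ∧ z = (w:ℤ)+1 := by
    intro x y z
    rw [ht_def]
    simp only [Finset.mem_product, Finset.mem_Icc]
    omega
  have hD : rectF h h (w+1) = s ∪ t := by
    ext ⟨x, y, z⟩
    rw [Finset.mem_union, hmem_t, ← Finset.mem_coe, ← Finset.mem_coe,
      show ((rectF h h (w+1) : Finset V3) : Set V3) = rect h h (w+1) from rfl,
      show ((s : Finset V3) : Set V3) = rect h h w from rfl, mem_rect, mem_rect]
    push_cast
    omega
  have hdisj : Disjoint s t := by
    rw [Finset.disjoint_left]
    rintro ⟨x, y, z⟩ hv hvt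
    rw [hmem_t] at hvt
    rw [← Finset.mem_coe, show ((s : Finset V3) : Set V3) = rect h h w from rfl, mem_rect] at hv
    omega
  have htcard : t.card = h * h := by
    rw [ht_def, Finset.card_product, Finset.card_product, Int.card_Icc]
    simp only [add_sub_cancel_right, Int.toNat_natCast]
    have e1 : (Finset.Icc ((w:ℤ)+1) ((w:ℤ)+1)).card = 1 := by
      rw [Int.card_Icc]
      omega
    rw [e1, mul_one]
  set F : Finset V3 → Prop := IFill a b c (c+1) (rect h h w) with hF_def
  set E : Finset V3 → Prop := IFill a b c (c+1) (rect h h (w+1)) with hE_def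
  have hrect_sub : rect h h w ⊆ rect h h (w+1) := by
    rintro ⟨x, y, z⟩ hv
    rw [mem_rect] at hv ⊢
    push_cast
    omega
  have hF : ∀ B ∈ s.powerset, ∀ C ∈ t.powerset, (F (B ∪ C) ↔ F B) := by
    intro B hB C hC
    have hkey : (↑(B ∪ C) : Set V3) ∩ rect h h w = (↑B : Set V3) ∩ rect h h w := by
      ext v
      simp only [Finset.coe_union, Set.mem_inter_iff, Set.mem_union, Finset.mem_coe]
      constructor
      · rintro ⟨hv1 | hv1, hv2⟩
        · exact ⟨hv1, hv2⟩
        · exfalso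
          have hvt := Finset.mem_powerset.1 hC hv1
          obtain ⟨x, y, z⟩ := v
          rw [hmem_t] at hvt
          rw [mem_rect] at hv2
          omega
      · rintro ⟨hv1, hv2⟩
        exact ⟨Or.inl hv1, hv2⟩
    rw [hF_def]
    unfold IFill closure3
    rw [hkey]
  have hFs : F s := by
    intro v hv
    exact inter_subset_closure3 a b c (c+1) (rect h h w) (rect h h w) ⟨hv, hv⟩
  have hEF : ∀ A ∈ (s ∪ t).powerset, F A → A ∩ t ≠ ∅ → E A := by
    intro A hA hFA hne
    have hsub : rect h h w ⊆ closure3 a b c (c+1) (rect h h (w+1)) ↑A :=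
      fun v hv => closure3_mono a b c (c+1) hrect_sub subset_rfl (hFA hv)
    obtain ⟨v, hv⟩ := Finset.nonempty_iff_ne_empty.2 hne
    rw [Finset.mem_inter] at hv
    have hvt := hv.2
    obtain ⟨x0, y0, z0⟩ := v
    rw [hmem_t] at hvt
    obtain ⟨⟨hx01, hx02⟩, ⟨hy01, hy02⟩, rfl⟩ := hvt
    have hseed : (x0, y0, (w:ℤ)+1) ∈ closure3 a b c (c+1) (rect h h (w+1)) ↑A := by
      apply inter_subset_closure3
      refine ⟨hv.1, ?_⟩
      rw [mem_rect]
      push_cast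
      refine ⟨⟨hx01, hx02⟩, ⟨hy01, hy02⟩, by omega, by omega⟩
    have hlayer := layer_fill a b c ha hab hbc h w hcw ↑A hsub hx01 hx02 hy01 hy02 hseed
    rintro ⟨x, y, z⟩ hvmem
    rw [mem_rect] at hvmem
    push_cast at hvmem
    obtain ⟨⟨hx1, hx2⟩, ⟨hy1, hy2⟩, hz1, hz2⟩ := hvmem
    rcases le_or_gt z (w:ℤ) with hzw | hzw
    · apply hsub
      rw [mem_rect]
      exact ⟨⟨hx1, hx2⟩, ⟨hy1, hy2⟩, hz1, hzw⟩
    · have : z = (w:ℤ)+1 := by omega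
      rw [this]
      exact hlayer x y hx1 hx2 hy1 hy2
  have hbound := PP_cond_bound hdisj hp hp1 E F hF hFs hEF
  calc 1 - Real.exp (-(p * (h:ℝ)^2)) ≤ 1 - (1 - p) ^ t.card := by
        have h0 : (0:ℝ) ≤ 1 - p := by linarith
        have h1 : 1 - p ≤ Real.exp (-p) := by
          have := Real.add_one_le_exp (-p)
          linarith
        have h2 : (1 - p) ^ t.card ≤ Real.exp (-(p * (h:ℝ)^2)) := by
          calc (1 - p) ^ t.card ≤ (Real.exp (-p)) ^ t.card := pow_le_pow_left₀ h0 h1 _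
            _ = Real.exp (-(p * (h:ℝ)^2)) := by
                rw [← Real.exp_nat_mul, htcard]
                congr 1
                push_cast
                ring
        linarith
    _ ≤ PPc (rectF h h (w + 1)) p (IFill a b c (c + 1) (rect h h (w + 1)))
        (IFill a b c (c + 1) (rect h h w)) := by
        unfold PPc
        rw [hD]
        exact hbound
end
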